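/- arXiv:2108.13569 — 4 statements merged into one kernel-verified Lean document; each statement's English description precedes it below -/
import Mathlib

section
/- Let K₁,…,K_d be a strongly separated family of convex bodies in ℝ^d. Then there are at most two affine hyperplanes H (as subsets of ℝ^d of the form {x : ⟨u,x⟩ = α} with u ≠ 0) such that H is tangent to every Kᵢ with every Kᵢ on the same closed side of H, i.e., H ∩ Kᵢ ≠ ∅ for every i and there is a choice of orientation with Kᵢ ⊆ {x : ⟨u,x⟩ ≥ α} for every i. -/
open scoped InnerProductSpace

/-- A family of sets in `ℝ^d` is strongly separated if every subset of indices can be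
strictly separated from its complement by an affine hyperplane. -/
def StronglySeparated {d m : ℕ} (S : Fin m → Set (EuclideanSpace ℝ (Fin d))) : Prop :=
  ∀ I : Finset (Fin m), ∃ (u : EuclideanSpace ℝ (Fin d)) (α : ℝ), u ≠ 0 ∧
    (∀ i ∈ I, ∀ x ∈ S i, ⟪u, x⟫_ℝ < α) ∧ (∀ i, i ∉ I → ∀ x ∈ S i, α < ⟪u, x⟫_ℝ)

/-!
For a common supporting hyperplane `H = {⟪u, ·⟫ = α}` touching `Kᵢ` at `pᵢ`, consider the
determinant `D` of the `(d+1) × (d+1)` matrix with rows `(pᵢ, 1)` and `(u, -α)`. Strong separation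
forbids affine dependences among points `xᵢ ∈ Kᵢ` (a Radon-type argument), and pairing with
`(u, α)` shows that `(u, -α)` is not in the span of the lifted points lying on `H`; so `D ≠ 0`
for every transversal `xᵢ ∈ Kᵢ ∩ H`.

Given two such hyperplanes `(u, α)` and `(u', α')`, every member of the pencil
`(1 - s) (u, α) - s (u', α')`, `s ∈ [0, 1]`, still meets every `Kᵢ`. The pairs `(s, x)` with `x` a
transversal of the `s`-th hyperplane form a compact set with convex fibres over `[0, 1]`, hence a
connected one, on which `D` does not vanish. Comparing `s = 0` with `s = 1`, where the row is
`-(u', -α')`, the two hyperplanes give determinants of opposite signs, and three real numbers cannot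
have pairwise opposite signs.
-/

open Matrix Set

theorem IsCompact.isPreconnected_of_isPreconnected_fibers {α β : Type*} [TopologicalSpace α]
    [TopologicalSpace β] [T2Space β] {f : α → β} (hf : Continuous f) {C : Set α}
    (hC : IsCompact C) (himage : IsPreconnected (f '' C))
    (hfibers : ∀ b, IsPreconnected (C ∩ f ⁻¹' {b})) : IsPreconnected C := by
  refine isPreconnected_closed_iff.2 fun u v hu hv hCuv ⟨x, hxC, hxu⟩ ⟨y, hyC, hyv⟩ => ?_
  have hclosed : ∀ w, IsClosed w → IsClosed (f '' (C ∩ w)) := fun w hw =>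
    ((hC.inter_right hw).image hf).isClosed
  obtain ⟨b, -, ⟨x', ⟨hx'C, hx'u⟩, rfl⟩, ⟨y', ⟨hy'C, hy'v⟩, hy'b⟩⟩ :=
    isPreconnected_closed_iff.1 himage _ _ (hclosed u hu) (hclosed v hv)
      (by rintro _ ⟨z, hz, rfl⟩; rcases hCuv hz with h | h
          exacts [Or.inl ⟨z, ⟨hz, h⟩, rfl⟩, Or.inr ⟨z, ⟨hz, h⟩, rfl⟩])
      ⟨f x, mem_image_of_mem f hxC, x, ⟨hxC, hxu⟩, rfl⟩
      ⟨f y, mem_image_of_mem f hyC, y, ⟨hyC, hyv⟩, rfl⟩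
  obtain ⟨z, ⟨hzC, -⟩, hz⟩ := isPreconnected_closed_iff.1 (hfibers (f x')) u v hu hv
    (inter_subset_left.trans hCuv) ⟨x', ⟨hx'C, rfl⟩, hx'u⟩ ⟨y', ⟨hy'C, hy'b⟩, hy'v⟩
  exact ⟨z, hzC, hz⟩

theorem IsPreconnected.mul_pos_of_forall_ne_zero {α : Type*} [TopologicalSpace α] {s : Set α}
    (hs : IsPreconnected s) {g : α → ℝ} (hg : ContinuousOn g s) (hg0 : ∀ x ∈ s, g x ≠ 0)
    {x y : α} (hx : x ∈ s) (hy : y ∈ s) : 0 < g x * g y := by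
  by_contra! hxy
  have hzero : ∀ {x y}, x ∈ s → y ∈ s → g x ≤ 0 → 0 ≤ g y → False := fun hx hy h h' => by
    obtain ⟨z, hz, hz0⟩ := hs.intermediate_value hx hy hg ⟨h, h'⟩
    exact hg0 z hz hz0
  rcases mul_nonpos_iff.1 hxy with ⟨h, h'⟩ | ⟨h, h'⟩
  exacts [hzero hy hx h' h, hzero hx hy h h']

theorem Set.encard_le_two_of_pairwise_mul_neg {α : Type*} {s : Set α} (f : α → ℝ)
    (hf : s.Pairwise fun x y => f x * f y < 0) : s.encard ≤ 2 := by
  by_contra! h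
  obtain ⟨t, hts, ht⟩ := exists_subset_encard_eq (Order.add_one_le_of_lt h)
  obtain ⟨x, y, z, hxy, hxz, hyz, rfl⟩ := encard_eq_three.1 ht
  have hx : x ∈ s := hts (by simp)
  have hy : y ∈ s := hts (by simp)
  have hz : z ∈ s := hts (by simp)
  have hxy' : f x * f y < 0 := hf hx hy hxy
  have hxz' : f x * f z < 0 := hf hx hz hxz
  have hyz' : f y * f z < 0 := hf hy hz hyz
  nlinarith [mul_pos_of_neg_of_neg hxy' hxz',
    mul_nonpos_of_nonneg_of_nonpos (sq_nonneg (f x)) hyz'.le]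

section Pencil

variable {F ι : Type*} [NormedAddCommGroup F] [InnerProductSpace ℝ F]

theorem Convex.exists_mem_inner_eq {K : Set F} (hK : Convex ℝ K) {p p' : F} (hp : p ∈ K)
    (hp' : p' ∈ K) {u : F} {c : ℝ} (hpc : ⟪u, p⟫_ℝ ≤ c) (hp'c : c ≤ ⟪u, p'⟫_ℝ) :
    ∃ y ∈ K, ⟪u, y⟫_ℝ = c := by
  obtain ⟨y, hy, hyc⟩ := (convex_segment p p').isPreconnected.intermediate_value
    (left_mem_segment ℝ p p') (right_mem_segment ℝ p p')
    (continuous_const.inner continuous_id).continuousOn ⟨hpc, hp'c⟩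
  exact ⟨y, hK.segment_subset hp hp' hy, hyc⟩

def SupportsAt (K : ι → Set F) (a : F × ℝ) (p : ι → F) : Prop :=
  ∀ i, p i ∈ K i ∧ ⟪a.1, p i⟫_ℝ = a.2 ∧ ∀ y ∈ K i, a.2 ≤ ⟪a.1, y⟫_ℝ

def pencil (a a' : F × ℝ) (s : ℝ) : F × ℝ := (1 - s) • a - s • a'

@[simp] theorem pencil_zero (a a' : F × ℝ) : pencil a a' 0 = a := by simp [pencil]

@[simp] theorem pencil_one (a a' : F × ℝ) : pencil a a' 1 = -a' := by simp [pencil]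

theorem continuous_pencil (a a' : F × ℝ) : Continuous (pencil a a') := by
  unfold pencil; fun_prop

theorem inner_pencil_sub (a a' : F × ℝ) (s : ℝ) (y : F) :
    ⟪(pencil a a' s).1, y⟫_ℝ - (pencil a a' s).2 =
      (1 - s) * (⟪a.1, y⟫_ℝ - a.2) - s * (⟪a'.1, y⟫_ℝ - a'.2) := by
  simp only [pencil, Prod.fst_sub, Prod.snd_sub, Prod.smul_fst, Prod.smul_snd, inner_sub_left,
    real_inner_smul_left, smul_eq_mul]
  ring

theorem pencil_ne_zero {a a' : F × ℝ} (ha : a ≠ 0) (ha' : a' ≠ 0)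
    (hne : {y | ⟪a.1, y⟫_ℝ = a.2} ≠ {y | ⟪a'.1, y⟫_ℝ = a'.2}) {s : ℝ} (hs : s ∈ Icc 0 1) :
    pencil a a' s ≠ 0 := by
  intro h0
  rcases hs.1.eq_or_lt with rfl | hs0
  · exact ha (by simpa using h0)
  rcases hs.2.eq_or_lt with rfl | hs1
  · exact ha' (by simpa using h0)
  refine hne (Set.ext fun y => ?_)
  have key : (1 - s) * (⟪a.1, y⟫_ℝ - a.2) = s * (⟪a'.1, y⟫_ℝ - a'.2) := by
    have := inner_pencil_sub a a' s y
    rw [h0, Prod.fst_zero, Prod.snd_zero, inner_zero_left, sub_zero] at this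
    linarith
  simp only [mem_ofPred_eq, ← sub_eq_zero (a := ⟪_, y⟫_ℝ)]
  rw [← mul_eq_zero_iff_left (sub_pos.2 hs1).ne', key, mul_eq_zero_iff_left hs0.ne']

def pencilTransversals (K : ι → Set F) (a a' : F × ℝ) : Set (ℝ × (ι → F)) :=
  Icc 0 1 ×ˢ univ.pi K ∩ {q | ∀ i, ⟪(pencil a a' q.1).1, q.2 i⟫_ℝ = (pencil a a' q.1).2}

variable {K : ι → Set F} {a a' : F × ℝ}

theorem isCompact_pencilTransversals (hK : ∀ i, IsCompact (K i)) :
    IsCompact (pencilTransversals K a a') := by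
  refine (isCompact_Icc.prod (isCompact_univ_pi hK)).inter_right ?_
  simp only [ofPred_forall]
  have := continuous_pencil a a'
  exact isClosed_iInter fun i => isClosed_eq (by fun_prop) (by fun_prop)

theorem convex_pencilTransversals_inter_fst_preimage (hK : ∀ i, Convex ℝ (K i)) (s : ℝ) :
    Convex ℝ (pencilTransversals K a a' ∩ Prod.fst ⁻¹' {s}) := by
  have hfiber : pencilTransversals K a a' ∩ Prod.fst ⁻¹' {s} = (Icc 0 1 ∩ {s}) ×ˢ
      univ.pi fun i => K i ∩ {y | ⟪(pencil a a' s).1, y⟫_ℝ = (pencil a a' s).2} := by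
    ext ⟨t, x⟩
    simp only [pencilTransversals, mem_inter_iff, mem_prod, mem_pi, mem_univ, true_implies,
      mem_ofPred_eq, mem_preimage, mem_singleton_iff]
    constructor
    · rintro ⟨⟨⟨ht, hx⟩, hxt⟩, rfl⟩
      exact ⟨⟨ht, rfl⟩, fun i => ⟨hx i, hxt i⟩⟩
    · rintro ⟨⟨ht, rfl⟩, hx⟩
      exact ⟨⟨⟨ht, fun i => (hx i).1⟩, fun i => (hx i).2⟩, rfl⟩
  rw [hfiber]
  exact ((convex_Icc 0 1).inter (convex_singleton s)).prod
    (convex_pi fun i _ => (hK i).inter (convex_hyperplane (innerₛₗ ℝ _).isLinear _))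

theorem fst_image_pencilTransversals (hK : ∀ i, Convex ℝ (K i)) {p p' : ι → F}
    (hp : SupportsAt K a p) (hp' : SupportsAt K a' p') :
    Prod.fst '' pencilTransversals K a a' = Icc 0 1 := by
  refine Subset.antisymm (image_subset_iff.2 fun q hq => hq.1.1) fun s hs => ?_
  have hmeet : ∀ i, ∃ y ∈ K i, ⟪(pencil a a' s).1, y⟫_ℝ = (pencil a a' s).2 := fun i => by
    obtain ⟨hpK, hpa, -⟩ := hp i
    obtain ⟨hp'K, hp'a, -⟩ := hp' i
    have hpa' := (hp' i).2.2 _ hpK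
    have hp'a' := (hp i).2.2 _ hp'K
    have h₁ := inner_pencil_sub a a' s (p i)
    have h₂ := inner_pencil_sub a a' s (p' i)
    exact (hK i).exists_mem_inner_eq hpK hp'K (by nlinarith [hs.1]) (by nlinarith [hs.2])
  choose x hxK hx using hmeet
  exact ⟨(s, x), ⟨⟨hs, fun i _ => hxK i⟩, hx⟩, rfl⟩

theorem isPreconnected_pencilTransversals (hKc : ∀ i, IsCompact (K i))
    (hK : ∀ i, Convex ℝ (K i)) {p p' : ι → F} (hp : SupportsAt K a p) (hp' : SupportsAt K a' p') :
    IsPreconnected (pencilTransversals K a a') :=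
  (isCompact_pencilTransversals hKc).isPreconnected_of_isPreconnected_fibers continuous_fst
    (by rw [fst_image_pencilTransversals hK hp hp']; exact isPreconnected_Icc)
    fun s => (convex_pencilTransversals_inter_fst_preimage hK s).isPreconnected

end Pencil

section Tangency

variable {d : ℕ}
local notation "E" => EuclideanSpace ℝ (Fin d)

theorem StronglySeparated.eq_zero_of_sum_smul_eq_zero {m : ℕ} {S : Fin m → Set E}
    (hS : StronglySeparated S) {x : Fin m → E} (hx : ∀ i, x i ∈ S i) {w : Fin m → ℝ}
    (hw : ∑ i, w i = 0) (hwx : ∑ i, w i • x i = 0) : w = 0 := by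
  classical
  obtain ⟨u, α, -, hlt, hgt⟩ := hS {i | 0 < w i}
  have hterm : ∀ i, w i * (⟪u, x i⟫_ℝ - α) ≤ 0 ∧ ⟪u, x i⟫_ℝ - α ≠ 0 := fun i => by
    by_cases hi : 0 < w i
    · have := hlt i (by simpa using hi) _ (hx i)
      exact ⟨mul_nonpos_of_nonneg_of_nonpos hi.le (by linarith), by linarith⟩
    · have := hgt i (by simpa using hi) _ (hx i)
      exact ⟨mul_nonpos_of_nonpos_of_nonneg (not_lt.1 hi) (by linarith), by linarith⟩
  have hsum : ∑ i, w i * (⟪u, x i⟫_ℝ - α) = 0 := by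
    calc ∑ i, w i * (⟪u, x i⟫_ℝ - α) = ⟪u, ∑ i, w i • x i⟫_ℝ - (∑ i, w i) * α := by
          simp only [mul_sub, Finset.sum_sub_distrib, inner_sum, inner_smul_right, Finset.sum_mul]
      _ = 0 := by rw [hw, hwx, inner_zero_right, zero_mul, sub_zero]
  funext i
  have := (Finset.sum_eq_zero_iff_of_nonpos fun i _ => (hterm i).1).1 hsum i (Finset.mem_univ i)
  exact (mul_eq_zero.1 this).resolve_right (hterm i).2

def tangencyMatrix (x : Fin d → E) (a : E × ℝ) : Matrix (Option (Fin d)) (Option (Fin d)) ℝ :=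
  Matrix.of fun
    | some i, some j => x i j
    | some _, none => 1
    | none, some j => a.1 j
    | none, none => -a.2

theorem vecMul_tangencyMatrix_some (x : Fin d → E) (a : E × ℝ) (v : Option (Fin d) → ℝ)
    (j : Fin d) :
    (v ᵥ* tangencyMatrix x a) (some j) = (∑ i, v (some i) • x i + v none • a.1) j := by
  simp [vecMul, dotProduct, Fintype.sum_option, tangencyMatrix, add_comm]

theorem vecMul_tangencyMatrix_none (x : Fin d → E) (a : E × ℝ) (v : Option (Fin d) → ℝ) :
    (v ᵥ* tangencyMatrix x a) none = ∑ i, v (some i) - v none * a.2 := by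
  simp [vecMul, dotProduct, Fintype.sum_option, tangencyMatrix]
  ring

theorem det_tangencyMatrix_smul (x : Fin d → E) (a : E × ℝ) (c : ℝ) :
    (tangencyMatrix x (c • a)).det = c * (tangencyMatrix x a).det := by
  have : tangencyMatrix x (c • a) =
      (tangencyMatrix x a).updateRow none (c • tangencyMatrix x a none) := by
    ext (_ | i) (_ | j) <;> simp [tangencyMatrix]
  rw [this, det_updateRow_smul, updateRow_eq_self]

theorem continuous_det_tangencyMatrix :
    Continuous fun q : (Fin d → E) × (E × ℝ) => (tangencyMatrix q.1 q.2).det := by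
  refine Continuous.matrix_det (continuous_matrix fun i j => ?_)
  rcases i with _ | i <;> rcases j with _ | j <;>
    simp only [tangencyMatrix, Matrix.of_apply] <;> fun_prop

theorem StronglySeparated.det_tangencyMatrix_ne_zero {S : Fin d → Set E}
    (hS : StronglySeparated S) {x : Fin d → E} (hx : ∀ i, x i ∈ S i) {a : E × ℝ} (ha : a ≠ 0)
    (hxa : ∀ i, ⟪a.1, x i⟫_ℝ = a.2) : (tangencyMatrix x a).det ≠ 0 := by
  rw [Ne, ← exists_vecMul_eq_zero_iff]
  rintro ⟨v, hv0, hv⟩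
  set w : Fin d → ℝ := fun i => v (some i)
  have hcols : ∑ i, w i • x i + v none • a.1 = 0 := by
    ext j
    simpa [vecMul_tangencyMatrix_some] using congrFun hv (some j)
  have hlast : ∑ i, w i = v none * a.2 := by
    have := congrFun hv none
    rw [vecMul_tangencyMatrix_none] at this
    simpa [sub_eq_zero] using this
  have hnone : v none = 0 := by
    have hinner := congrArg (⟪a.1, ·⟫_ℝ) hcols
    simp only [inner_add_right, inner_sum, inner_smul_right, hxa, ← Finset.sum_mul, hlast,
      real_inner_self_eq_norm_sq, inner_zero_right] at hinner
    have hpos : a.2 ^ 2 + ‖a.1‖ ^ 2 ≠ 0 := by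
      contrapose! ha
      have h1 : ‖a.1‖ = 0 := by nlinarith [sq_nonneg a.2, sq_nonneg ‖a.1‖]
      have h2 : a.2 = 0 := by nlinarith [sq_nonneg a.2, sq_nonneg ‖a.1‖]
      exact Prod.ext (norm_eq_zero.1 h1) h2
    exact (mul_eq_zero.1 (by linear_combination hinner)).resolve_right hpos
  have hw : w = 0 := hS.eq_zero_of_sum_smul_eq_zero hx (by rw [hlast, hnone, zero_mul])
    (by simpa [hnone] using hcols)
  exact hv0 (funext fun | none => hnone | some i => congrFun hw i)

theorem SupportsAt.det_mul_det_neg {K : Fin d → Set E} (hS : StronglySeparated K)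
    (hKc : ∀ i, IsCompact (K i)) (hK : ∀ i, Convex ℝ (K i)) {a a' : E × ℝ} {p p' : Fin d → E}
    (hp : SupportsAt K a p) (hp' : SupportsAt K a' p') (ha : a ≠ 0) (ha' : a' ≠ 0)
    (hne : {y | ⟪a.1, y⟫_ℝ = a.2} ≠ {y | ⟪a'.1, y⟫_ℝ = a'.2}) :
    (tangencyMatrix p a).det * (tangencyMatrix p' a').det < 0 := by
  have hmem₀ : ((0 : ℝ), p) ∈ pencilTransversals K a a' :=
    ⟨⟨left_mem_Icc.2 zero_le_one, fun i _ => (hp i).1⟩, fun i => by simpa using (hp i).2.1⟩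
  have hmem₁ : ((1 : ℝ), p') ∈ pencilTransversals K a a' :=
    ⟨⟨right_mem_Icc.2 zero_le_one, fun i _ => (hp' i).1⟩, fun i => by simpa using (hp' i).2.1⟩
  have hsign := (isPreconnected_pencilTransversals hKc hK hp hp').mul_pos_of_forall_ne_zero
    (g := fun q => (tangencyMatrix q.2 (pencil a a' q.1)).det)
    (continuous_det_tangencyMatrix.comp
      (continuous_snd.prodMk ((continuous_pencil a a').comp continuous_fst))).continuousOn
    (fun q hq => hS.det_tangencyMatrix_ne_zero (fun i => hq.1.2 i (mem_univ i))
      (pencil_ne_zero ha ha' hne hq.1.1) hq.2) hmem₀ hmem₁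
  rw [pencil_zero, pencil_one, ← neg_one_smul ℝ a', det_tangencyMatrix_smul] at hsign
  linarith

end Tangency

theorem at_most_two_sandwiching_tangents_general {d : ℕ}
    (K : Fin d → Set (EuclideanSpace ℝ (Fin d)))
    (hcomp : ∀ i, IsCompact (K i)) (hconv : ∀ i, Convex ℝ (K i))
    (hsep : StronglySeparated K) :
    {H : Set (EuclideanSpace ℝ (Fin d)) | ∃ (u : EuclideanSpace ℝ (Fin d)) (α : ℝ),
        u ≠ 0 ∧ H = {x | ⟪u, x⟫_ℝ = α} ∧
        ∀ i : Fin d, (H ∩ K i).Nonempty ∧ K i ⊆ {x | α ≤ ⟪u, x⟫_ℝ}}.encard ≤ 2 := by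
  set T := {H : Set (EuclideanSpace ℝ (Fin d)) | _}
  have hdata : ∀ H ∈ T, ∃ (a : EuclideanSpace ℝ (Fin d) × ℝ)
      (p : Fin d → EuclideanSpace ℝ (Fin d)),
      a ≠ 0 ∧ H = {x | ⟪a.1, x⟫_ℝ = a.2} ∧ SupportsAt K a p := by
    rintro H ⟨u, α, hu, rfl, htan⟩
    choose p hpH hpK using fun i => (htan i).1
    exact ⟨(u, α), p, fun h => hu (congrArg Prod.fst h), rfl,
      fun i => ⟨hpK i, hpH i, fun y hy => (htan i).2 hy⟩⟩
  choose! a p ha hHa hp using hdata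
  refine encard_le_two_of_pairwise_mul_neg (fun H => (tangencyMatrix (p H) (a H)).det) ?_
  intro H hH H' hH' hne
  exact (hp H hH).det_mul_det_neg hsep hcomp hconv (hp H' hH') (ha H hH) (ha H' hH')
    (by rwa [← hHa H hH, ← hHa H' hH'])

/-- For a strongly separated family of `d` convex bodies in `ℝ^d`, there are at most two
affine hyperplanes tangent to every body with every body on the same closed side. -/
theorem at_most_two_sandwiching_tangents {d : ℕ}
    (K : Fin d → Set (EuclideanSpace ℝ (Fin d)))
    (hcomp : ∀ i, IsCompact (K i)) (hconv : ∀ i, Convex ℝ (K i))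
    (hint : ∀ i, (interior (K i)).Nonempty)
    (hsep : StronglySeparated K) :
    {H : Set (EuclideanSpace ℝ (Fin d)) | ∃ (u : EuclideanSpace ℝ (Fin d)) (α : ℝ),
        u ≠ 0 ∧ H = {x | ⟪u, x⟫_ℝ = α} ∧
        ∀ i : Fin d, (H ∩ K i).Nonempty ∧ K i ⊆ {x | α ≤ ⟪u, x⟫_ℝ}}.encard ≤ 2 :=
  at_most_two_sandwiching_tangents_general K hcomp hconv hsep
end

section
/- Let K₁,…,K_{d+1} be a strongly separated family of nonempty compact convex sets in ℝ^d such that every d-element subfamily is affinely spanning (for every i, the affine span of ⋃_{j ≠ i} K_j is all of ℝ^d). Let A ⊔ B = {1,…,d+1} be a partition and let a ∈ A. Then there exists exactly one pair (u,α) with ‖u‖ = 1 such that, writing H = {x : ⟨u,x⟩ = α}: (1) H ∩ K_i ≠ ∅ for every i ≠ a; (2) K_i ⊆ {x : ⟨u,x⟩ ≥ α} for every i ∈ A; (3) K_i ⊆ {x : ⟨u,x⟩ ≤ α} for every i ∈ B; and (4) K_a ⊆ {x : ⟨u,x⟩ > α}. -/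
open scoped InnerProductSpace

/-!
A transversal of a strongly separated family is affinely independent, so no hyperplane meets all
`d + 1` sets. If two hyperplanes solve the problem, a combination of their height functions
vanishes at a point of `K a` and changes sign on every other set, hence meets all of them, so it is
trivial: this gives uniqueness.

Existence is by induction on the number of sets that are not points. When all sets but `K a` are
points, take the hyperplane through them. Otherwise pin one set `K j` to a point `c`. By the same
pencil argument, if the solution pinned at `c` has a point `y ∈ K j` on the wrong side, then the
solution pinned at `y` has a strictly larger value of a continuous potential; so a maximiser over
the compact set of pinned solutions has all of `K j` on the correct side.
-/

section Height

variable {E : Type*} [NormedAddCommGroup E] [InnerProductSpace ℝ E]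

/-- The signed height of `x` over the oriented hyperplane `p = (u, α)`. It is linear in `p`, so
pencils of hyperplanes are linear combinations. -/
noncomputable def height (x : E) : E × ℝ →ₗ[ℝ] ℝ :=
  (innerₗ E).flip x ∘ₗ LinearMap.fst ℝ E ℝ - LinearMap.snd ℝ E ℝ

@[simp]
lemma height_apply (x : E) (p : E × ℝ) : height x p = ⟪p.1, x⟫_ℝ - p.2 := by
  simp [height, real_inner_comm]

@[fun_prop]
lemma Continuous.height {X : Type*} [TopologicalSpace X] {f : X → E} {g : X → E × ℝ}
    (hf : Continuous f) (hg : Continuous g) : Continuous fun x => height (f x) (g x) := by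
  simp only [height_apply]
  fun_prop

lemma Convex.exists_height_eq_zero {S : Set E} (hS : Convex ℝ S) {p : E × ℝ} {x y : E}
    (hx : x ∈ S) (hy : y ∈ S) (h : height x p * height y p ≤ 0) : ∃ z ∈ S, height z p = 0 := by
  have hf : ContinuousOn (fun z => height z p) S := by fun_prop
  rcases mul_nonpos_iff.1 h with ⟨hx0, hy0⟩ | ⟨hx0, hy0⟩
  · exact hS.isPreconnected.intermediate_value hy hx hf ⟨hy0, hx0⟩
  · exact hS.isPreconnected.intermediate_value hx hy hf ⟨hx0, hy0⟩

lemma Convex.sign_mul_height_pos {S : Set E} (hS : Convex ℝ S) {p : E × ℝ} {s : ℝ}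
    (hS0 : ∀ x ∈ S, height x p ≠ 0) {x₀ : E} (hx₀ : x₀ ∈ S) (hpos : 0 < s * height x₀ p)
    {x : E} (hx : x ∈ S) : 0 < s * height x p := by
  by_contra! hneg
  have hs : 0 < s ^ 2 := by positivity [(left_ne_zero_of_mul hpos.ne')]
  obtain ⟨z, hz, hz0⟩ := hS.exists_height_eq_zero hx₀ hx
    (nonpos_of_mul_nonpos_right (by nlinarith [mul_nonpos_of_nonneg_of_nonpos hpos.le hneg]) hs)
  exact hS0 z hz hz0

lemma exists_fst_ne_zero_height_eq_zero [FiniteDimensional ℝ E] {ι : Type*} [Fintype ι]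
    [Nonempty ι] (y : ι → E) (hy : Fintype.card ι ≤ Module.finrank ℝ E) :
    ∃ p : E × ℝ, p.1 ≠ 0 ∧ ∀ i, height (y i) p = 0 := by
  obtain ⟨p, hp, hp0⟩ := Submodule.exists_mem_ne_zero_of_ne_bot <|
    LinearMap.ker_ne_bot_of_finrank_lt (f := LinearMap.pi fun i => height (y i))
      (by simp only [Module.finrank_prod, Module.finrank_pi, Module.finrank_self]; omega)
  have hpy : ∀ i, height (y i) p = 0 := fun i => congrFun (LinearMap.mem_ker.1 hp) i
  refine ⟨p, fun h1 => hp0 (Prod.ext h1 ?_), hpy⟩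
  simpa [h1] using hpy (Classical.arbitrary ι)

def Supports (s : ℝ) (p : E × ℝ) (S : Set E) : Prop :=
  (∃ x ∈ S, height x p = 0) ∧ ∀ x ∈ S, 0 ≤ s * height x p

end Height

/-- With `σ i = ±1` according to `i ∈ A` or `i ∈ B`, this is the problem of the theorem; that
`K a` lies strictly on its side is then automatic (`StronglySeparated.sign_mul_height_pos`). -/
structure IsSidedTangent {ι E : Type*} [NormedAddCommGroup E] [InnerProductSpace ℝ E]
    (K : ι → Set E) (σ : ι → ℝ) (a : ι) (p : E × ℝ) : Prop where
  norm_fst : ‖p.1‖ = 1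
  supports : ∀ i, i ≠ a → Supports (σ i) p (K i)
  nonneg : ∀ x ∈ K a, 0 ≤ σ a * height x p

namespace StronglySeparated

variable {d m : ℕ}

lemma mono {S T : Fin m → Set (EuclideanSpace ℝ (Fin d))} (hS : StronglySeparated S)
    (hT : ∀ i, T i ⊆ S i) : StronglySeparated T := fun I => by
  obtain ⟨u, α, hu, hlt, hgt⟩ := hS I
  exact ⟨u, α, hu, fun i hi x hx => hlt i hi x (hT i hx), fun i hi x hx => hgt i hi x (hT i hx)⟩

lemma dim_pos {S : Fin m → Set (EuclideanSpace ℝ (Fin d))} (hS : StronglySeparated S) : 0 < d := by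
  obtain ⟨u, -, hu, -⟩ := hS ∅
  rcases Nat.eq_zero_or_pos d with rfl | hd
  · exact absurd (Subsingleton.elim u 0) hu
  · exact hd

lemma affineIndependent {S : Fin m → Set (EuclideanSpace ℝ (Fin d))} (hS : StronglySeparated S)
    {x : Fin m → EuclideanSpace ℝ (Fin d)} (hx : ∀ i, x i ∈ S i) : AffineIndependent ℝ x := by
  classical
  rw [affineIndependent_iff]
  intro s w hw hwx
  by_contra! h
  obtain ⟨i₀, hi₀, hwi₀⟩ := h
  -- separate the indices of positive weight from the others
  obtain ⟨u, α, -, hlt, hgt⟩ := hS (s.filter fun i => 0 < w i)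
  have hterm : ∀ i ∈ s, w i ≠ 0 → w i * (⟪u, x i⟫_ℝ - α) < 0 := by
    intro i hi hwi
    rcases hwi.lt_or_gt with hneg | hpos
    · have := hgt i (by simp [hneg.not_gt]) (x i) (hx i)
      nlinarith
    · have := hlt i (by simp [hi, hpos]) (x i) (hx i)
      nlinarith
  have hsum : ∑ i ∈ s, w i * (⟪u, x i⟫_ℝ - α) = 0 := by
    have := congrArg (⟪u, ·⟫_ℝ) hwx
    simp only [inner_sum, real_inner_smul_right, inner_zero_right] at this
    simp only [mul_sub, Finset.sum_sub_distrib, ← Finset.sum_mul, hw, this, zero_mul, sub_zero]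
  refine hsum.not_lt (Finset.sum_neg' (fun i hi => ?_) ⟨i₀, hi₀, hterm i₀ hi₀ hwi₀⟩)
  rcases eq_or_ne (w i) 0 with h0 | h0
  · simp [h0]
  · exact (hterm i hi h0).le

variable {K : Fin (d + 1) → Set (EuclideanSpace ℝ (Fin d))} {σ : Fin (d + 1) → ℝ}
  {a j : Fin (d + 1)}

/-- A transversal affinely spans `ℝ^d`. -/
lemma fst_eq_zero_of_forall_exists_height_eq_zero (hK : StronglySeparated K)
    {p : EuclideanSpace ℝ (Fin d) × ℝ} (h : ∀ i, ∃ x ∈ K i, height x p = 0) : p.1 = 0 := by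
  choose y hy hyp using h
  have hspan := (hK.affineIndependent hy).vectorSpan_eq_top_of_card_eq_finrank_add_one (by simp)
  have hle : vectorSpan ℝ (Set.range y) ≤ (ℝ ∙ p.1)ᗮ := by
    rw [vectorSpan_range_eq_span_range_vsub_right ℝ y 0, Submodule.span_le]
    rintro _ ⟨i, rfl⟩
    have hi := hyp i
    have h0 := hyp 0
    simp only [height_apply] at hi h0
    simp only [SetLike.mem_coe, Submodule.mem_orthogonal_singleton_iff_inner_right, vsub_eq_sub,
      inner_sub_right]
    linarith
  rwa [hspan, top_le_iff, Submodule.orthogonal_eq_top_iff, Submodule.span_singleton_eq_bot] at hle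

lemma height_ne_zero (hK : StronglySeparated K) {p : EuclideanSpace ℝ (Fin d) × ℝ} (hp : p.1 ≠ 0)
    (h : ∀ i, i ≠ a → ∃ x ∈ K i, height x p = 0)
    {x : EuclideanSpace ℝ (Fin d)} (hx : x ∈ K a) : height x p ≠ 0 := fun hx0 =>
  hp <| hK.fst_eq_zero_of_forall_exists_height_eq_zero fun i =>
    if hi : i = a then ⟨x, hi ▸ hx, hx0⟩ else h i hi

lemma sign_mul_height_pos (hK : StronglySeparated K) (hσa : σ a ≠ 0)
    {p : EuclideanSpace ℝ (Fin d) × ℝ} (hp : ‖p.1‖ = 1)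
    (h : ∀ i, i ≠ a → ∃ x ∈ K i, height x p = 0) (hside : ∀ x ∈ K a, 0 ≤ σ a * height x p)
    {x : EuclideanSpace ℝ (Fin d)} (hx : x ∈ K a) : 0 < σ a * height x p :=
  (hside x hx).lt_of_ne' <| mul_ne_zero hσa <|
    hK.height_ne_zero (fun h0 => by simp [h0] at hp) h hx

/-- `s • p - t • q` changes sign on each `K i` with `i ≠ a, j`, so it vanishes somewhere on every
set. -/
lemma smul_sub_smul_eq_zero (hK : StronglySeparated K) (hconv : ∀ i, Convex ℝ (K i))
    (hσ : ∀ i, σ i ≠ 0) {p q : EuclideanSpace ℝ (Fin d) × ℝ} {s t : ℝ} (hst : 0 ≤ s * t)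
    (hp : ∀ i, i ≠ a → i ≠ j → Supports (σ i) p (K i))
    (hq : ∀ i, i ≠ a → i ≠ j → Supports (σ i) q (K i))
    (ha : ∃ x ∈ K a, height x (s • p - t • q) = 0) (hj : ∃ x ∈ K j, height x (s • p - t • q) = 0) :
    s • p - t • q = 0 := by
  have hzero : ∀ i, ∃ x ∈ K i, height x (s • p - t • q) = 0 := by
    intro i
    by_cases hia : i = a
    · exact hia ▸ ha
    by_cases hij : i = j
    · exact hij ▸ hj
    obtain ⟨⟨x, hx, hpx⟩, hpside⟩ := hp i hia hij
    obtain ⟨⟨y, hy, hqy⟩, hqside⟩ := hq i hia hij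
    refine (hconv i).exists_height_eq_zero hx hy ?_
    have hσi : 0 < σ i ^ 2 := by positivity [hσ i]
    have hxy : 0 ≤ height x q * height y p :=
      nonneg_of_mul_nonneg_right (by nlinarith [mul_nonneg (hqside x hx) (hpside y hy)]) hσi
    simp only [map_sub, map_smul, smul_eq_mul, hpx, hqy]
    nlinarith [mul_nonneg hst hxy]
  have h1 := hK.fst_eq_zero_of_forall_exists_height_eq_zero hzero
  obtain ⟨x, -, hx⟩ := ha
  refine Prod.ext h1 ?_
  simp only [height_apply, h1, inner_zero_left, zero_sub, neg_eq_zero] at hx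
  exact hx

theorem isSidedTangent_unique (hK : StronglySeparated K) (hconv : ∀ i, Convex ℝ (K i))
    (hne : (K a).Nonempty) (hσ : ∀ i, σ i ≠ 0) {p q : EuclideanSpace ℝ (Fin d) × ℝ}
    (hp : IsSidedTangent K σ a p) (hq : IsSidedTangent K σ a q) : p = q := by
  obtain ⟨x₀, hx₀⟩ := hne
  have hp₀ := hK.sign_mul_height_pos (hσ a) hp.norm_fst (fun i hi => (hp.supports i hi).1)
    hp.nonneg hx₀
  have hq₀ := hK.sign_mul_height_pos (hσ a) hq.norm_fst (fun i hi => (hq.supports i hi).1)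
    hq.nonneg hx₀
  -- normalise both hyperplanes to the same height at `x₀`
  set s := σ a * height x₀ q
  set t := σ a * height x₀ p
  have hx₀' : ∃ x ∈ K a, height x (s • p - t • q) = 0 :=
    ⟨x₀, hx₀, by simp only [map_sub, map_smul, smul_eq_mul, s, t]; ring⟩
  have h := hK.smul_sub_smul_eq_zero hconv hσ (mul_pos hq₀ hp₀).le
    (fun i hi _ => hp.supports i hi) (fun i hi _ => hq.supports i hi) hx₀' hx₀'
  rw [sub_eq_zero] at h
  have hst : s = t := by
    simpa [norm_smul, hp.norm_fst, hq.norm_fst, abs_of_pos hq₀, abs_of_pos hp₀] using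
      congrArg (fun r => ‖r.1‖) h
  rw [hst] at h
  exact smul_right_injective _ hp₀.ne' h

end StronglySeparated

section Pinned

variable {ι E : Type*} [NormedAddCommGroup E] [InnerProductSpace ℝ E]
  {K : ι → Set E} {σ : ι → ℝ} {a j : ι}

/-- Unit hyperplanes through a transversal `t` of the sets other than `K a`, supporting each
`K i` with `i ≠ j` from the side `σ i`: the solutions of the problem with `K j` pinned to the
point `t j`. -/
def pinnedTangents (K : ι → Set E) (σ : ι → ℝ) (a j : ι) : Set ((ι → E) × (E × ℝ)) :=
  {z | (∀ i, z.1 i ∈ K i) ∧ ‖z.2.1‖ = 1 ∧ (∀ i, i ≠ a → height (z.1 i) z.2 = 0) ∧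
    ∀ i, i ≠ j → ∀ x ∈ K i, 0 ≤ σ i * height x z.2}

lemma isCompact_pinnedTangents [FiniteDimensional ℝ E] (hK : ∀ i, IsCompact (K i)) (hja : j ≠ a) :
    IsCompact (pinnedTangents K σ a j) := by
  obtain ⟨R, hR⟩ := (hK j).isBounded.subset_closedBall 0
  refine ((isCompact_univ_pi hK).prod ((isCompact_sphere 0 1).prod
    (isCompact_closedBall 0 R))).of_isClosed_subset ?_ ?_
  · have h₁ : IsClosed {z : (ι → E) × (E × ℝ) | ∀ i, z.1 i ∈ K i} := by
      simp only [Set.ofPred_forall]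
      exact isClosed_iInter fun i =>
        (hK i).isClosed.preimage ((continuous_apply i).comp continuous_fst)
    have h₂ : IsClosed {z : (ι → E) × (E × ℝ) | ‖z.2.1‖ = 1} :=
      isClosed_eq (by fun_prop) continuous_const
    have h₃ : IsClosed {z : (ι → E) × (E × ℝ) | ∀ i, i ≠ a → height (z.1 i) z.2 = 0} := by
      simp only [Set.ofPred_forall]
      exact isClosed_iInter fun i => isClosed_iInter fun _ =>
        isClosed_eq (by fun_prop) continuous_const
    have h₄ : IsClosed
        {z : (ι → E) × (E × ℝ) | ∀ i, i ≠ j → ∀ x ∈ K i, 0 ≤ σ i * height x z.2} := by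
      simp only [Set.ofPred_forall]
      exact isClosed_iInter fun i => isClosed_iInter fun _ => isClosed_iInter fun x =>
        isClosed_iInter fun _ => isClosed_le continuous_const (by fun_prop)
    exact h₁.inter (h₂.inter (h₃.inter h₄))
  · rintro z ⟨ht, hn, hh, -⟩
    refine ⟨fun i _ => ht i, mem_sphere_zero_iff_norm.2 hn, mem_closedBall_zero_iff.2 ?_⟩
    have hz := hh j hja
    rw [height_apply, sub_eq_zero] at hz
    calc ‖z.2.2‖ = |⟪z.2.1, z.1 j⟫_ℝ| := by rw [hz, Real.norm_eq_abs]
      _ ≤ ‖z.2.1‖ * ‖z.1 j‖ := abs_real_inner_le_norm _ _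
      _ ≤ R := by rw [hn, one_mul]; exact mem_closedBall_zero_iff.1 (hR (ht j))

lemma supports_of_mem_pinnedTangents {z : (ι → E) × (E × ℝ)} (hz : z ∈ pinnedTangents K σ a j)
    {i : ι} (hia : i ≠ a) (hij : i ≠ j) : Supports (σ i) z.2 (K i) :=
  ⟨⟨z.1 i, hz.1 i, hz.2.2.1 i hia⟩, hz.2.2.2 i hij⟩

lemma exists_mem_pinnedTangents [DecidableEq ι] {c : E} {p : E × ℝ}
    (hp : IsSidedTangent (Function.update K j {c}) σ a p) (hc : c ∈ K j) (hja : j ≠ a)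
    (hne : (K a).Nonempty) : ∃ t, (t, p) ∈ pinnedTangents K σ a j ∧ t j = c := by
  obtain ⟨x₀, hx₀⟩ := hne
  have hKa : Function.update K j {c} a = K a := Function.update_of_ne hja.symm _ _
  have : ∀ i, ∃ x ∈ Function.update K j {c} i, i ≠ a → height x p = 0 := by
    intro i
    by_cases hia : i = a
    · exact ⟨x₀, hia ▸ hKa ▸ hx₀, fun h => (h hia).elim⟩
    · obtain ⟨x, hx, hx0⟩ := (hp.supports i hia).1
      exact ⟨x, hx, fun _ => hx0⟩
  choose t ht ht0 using this
  have htj : t j = c := by simpa using ht j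
  refine ⟨t, ⟨fun i => ?_, hp.norm_fst, ht0, fun i hij x hx => ?_⟩, htj⟩
  · rcases eq_or_ne i j with rfl | hij
    · exact (congrArg (· ∈ K i) htj).mpr hc
    · simpa [Function.update_of_ne hij] using ht i
  · rw [← Function.update_of_ne hij {c} K] at hx
    rcases eq_or_ne i a with rfl | hia
    · exact hp.nonneg x hx
    · exact (hp.supports i hia).2 x hx

end Pinned

namespace StronglySeparated

variable {d : ℕ} {K : Fin (d + 1) → Set (EuclideanSpace ℝ (Fin d))} {σ : Fin (d + 1) → ℝ}
  {a j : Fin (d + 1)}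

lemma sign_mul_height_pos_of_mem_pinnedTangents (hK : StronglySeparated K) (hσa : σ a ≠ 0)
    (hja : j ≠ a) {z : (Fin (d + 1) → EuclideanSpace ℝ (Fin d)) × (EuclideanSpace ℝ (Fin d) × ℝ)}
    (hz : z ∈ pinnedTangents K σ a j) {x : EuclideanSpace ℝ (Fin d)} (hx : x ∈ K a) :
    0 < σ a * height x z.2 :=
  hK.sign_mul_height_pos hσa hz.2.1 (fun i hi => ⟨z.1 i, hz.1 i, hz.2.2.1 i hi⟩)
    (hz.2.2.2 a hja.symm) hx

lemma potential_lt (hK : StronglySeparated K) (hconv : ∀ i, Convex ℝ (K i)) (hσ : ∀ i, σ i ≠ 0)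
    (hja : j ≠ a) {z z' : (Fin (d + 1) → EuclideanSpace ℝ (Fin d)) × (EuclideanSpace ℝ (Fin d) × ℝ)}
    (hz : z ∈ pinnedTangents K σ a j) (hz' : z' ∈ pinnedTangents K σ a j)
    {x₀ x₁ : EuclideanSpace ℝ (Fin d)} (hx₀ : x₀ ∈ K a) (hx₁ : x₁ ∈ K j)
    (hviol : σ j * height (z'.1 j) z.2 < 0) :
    σ j * height x₁ z.2 / (σ a * height x₀ z.2) <
      σ j * height x₁ z'.2 / (σ a * height x₀ z'.2) := by
  have hp₀ := hK.sign_mul_height_pos_of_mem_pinnedTangents (hσ a) hja hz hx₀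
  have hq₀ := hK.sign_mul_height_pos_of_mem_pinnedTangents (hσ a) hja hz' hx₀
  set s := σ a * height x₀ z'.2
  set t := σ a * height x₀ z.2
  set w := s • z.2 - t • z'.2
  have hwx₀ : height x₀ w = 0 := by simp only [w, map_sub, map_smul, smul_eq_mul, s, t]; ring
  have hwy : σ j * height (z'.1 j) w < 0 := by
    simp only [w, map_sub, map_smul, smul_eq_mul, hz'.2.2.1 j hja]
    nlinarith
  -- `w` vanishes on every set but `K j`, and is nonzero, so it has no zero on `K j`
  have hw : ∀ x ∈ K j, height x w ≠ 0 := fun x hx hx0 => by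
    have := hK.smul_sub_smul_eq_zero hconv hσ (mul_pos hq₀ hp₀).le
      (fun i hia hij => supports_of_mem_pinnedTangents hz hia hij)
      (fun i hia hij => supports_of_mem_pinnedTangents hz' hia hij) ⟨x₀, hx₀, hwx₀⟩ ⟨x, hx, hx0⟩
    simp [w, this] at hwy
  have hwx₁ := (hconv j).sign_mul_height_pos hw (hz'.1 j) (s := -σ j) (by linarith) hx₁
  simp only [w, map_sub, map_smul, smul_eq_mul] at hwx₁
  rw [div_lt_div_iff₀ hp₀ hq₀]
  linarith

/-- A maximiser of the potential of `potential_lt` over the pinned solutions solves the problem. -/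
theorem exists_isSidedTangent_of_update (hK : StronglySeparated K)
    (hcomp : ∀ i, IsCompact (K i)) (hconv : ∀ i, Convex ℝ (K i)) (hne : ∀ i, (K i).Nonempty)
    (hσ : ∀ i, σ i ≠ 0) (hja : j ≠ a)
    (hpin : ∀ c ∈ K j, ∃ p, IsSidedTangent (Function.update K j {c}) σ a p) :
    ∃ p, IsSidedTangent K σ a p := by
  obtain ⟨x₀, hx₀⟩ := hne a
  obtain ⟨x₁, hx₁⟩ := hne j
  have hlift : ∀ c ∈ K j, ∃ z ∈ pinnedTangents K σ a j, z.1 j = c := fun c hc => by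
    obtain ⟨p, hp⟩ := hpin c hc
    obtain ⟨t, ht, htc⟩ := exists_mem_pinnedTangents hp hc hja (hne a)
    exact ⟨(t, p), ht, htc⟩
  obtain ⟨z, hz, -⟩ := hlift x₁ hx₁
  obtain ⟨z, hz, hmax⟩ := (isCompact_pinnedTangents hcomp hja).exists_isMaxOn ⟨z, hz⟩
    (f := fun z => σ j * height x₁ z.2 / (σ a * height x₀ z.2)) <|
    ContinuousOn.div (by fun_prop) (by fun_prop) fun z hz =>
      (hK.sign_mul_height_pos_of_mem_pinnedTangents (hσ a) hja hz hx₀).ne'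
  refine ⟨z.2, hz.2.1, fun i hia => ?_, hz.2.2.2 a hja.symm⟩
  rcases eq_or_ne i j with rfl | hij
  · refine ⟨⟨z.1 i, hz.1 i, hz.2.2.1 i hia⟩, fun y hy => ?_⟩
    by_contra! hviol
    obtain ⟨z', hz', rfl⟩ := hlift y hy
    exact (hmax hz').not_gt (hK.potential_lt hconv hσ hia hz hz' hx₀ hx₁ hviol)
  · exact supports_of_mem_pinnedTangents hz hia hij

/-- When the sets other than `K a` are points, the hyperplane is the one through these `d` points,
oriented so that `K a`, which it misses, lies on the side `σ a`. -/
theorem exists_isSidedTangent_of_singleton (hK : StronglySeparated K) (hconv : Convex ℝ (K a))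
    (hne : (K a).Nonempty) (hσa : σ a ≠ 0) (hsing : ∀ i, i ≠ a → ∃ x, K i = {x}) :
    ∃ p, IsSidedTangent K σ a p := by
  choose! x hx using hsing
  have : Nonempty (Fin d) := ⟨⟨0, hK.dim_pos⟩⟩
  obtain ⟨p, hp0, hpx⟩ := exists_fst_ne_zero_height_eq_zero (x ∘ a.succAbove) (by simp)
  set p₁ := ‖p.1‖⁻¹ • p
  have hn : ‖p₁.1‖ = 1 := norm_smul_inv_norm hp0
  have hp₁x : ∀ i, i ≠ a → height (x i) p₁ = 0 := fun i hi => by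
    obtain ⟨k, rfl⟩ := Fin.exists_succAbove_eq hi
    simpa [p₁] using Or.inr (hpx k)
  have hmiss : ∀ y ∈ K a, height y p₁ ≠ 0 := fun y hy =>
    hK.height_ne_zero (fun h => by simp [h] at hn)
      (fun i hi => ⟨x i, by simp [hx i hi], hp₁x i hi⟩) hy
  obtain ⟨x₀, hx₀⟩ := hne
  obtain ⟨q, hqn, hqx, hqa, hq₀⟩ : ∃ q : EuclideanSpace ℝ (Fin d) × ℝ, ‖q.1‖ = 1 ∧
      (∀ i, i ≠ a → height (x i) q = 0) ∧ (∀ y ∈ K a, height y q ≠ 0) ∧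
      0 < σ a * height x₀ q := by
    rcases (mul_ne_zero hσa (hmiss x₀ hx₀)).lt_or_gt with hneg | hpos
    · refine ⟨-p₁, by simpa using hn, fun i hi => ?_, fun y hy => ?_, ?_⟩
      · rw [map_neg, hp₁x i hi, neg_zero]
      · rw [map_neg, neg_ne_zero]
        exact hmiss y hy
      · rw [map_neg]
        linarith
    · exact ⟨p₁, hn, hp₁x, hmiss, hpos⟩
  refine ⟨q, hqn, fun i hi => ?_, fun y hy => (hconv.sign_mul_height_pos hqa hx₀ hq₀ hy).le⟩
  simp only [Supports, hx i hi, Set.mem_singleton_iff, exists_eq_left, forall_eq, hqx i hi,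
    mul_zero, le_refl, and_self]

theorem exists_isSidedTangent (hK : StronglySeparated K) (hcomp : ∀ i, IsCompact (K i))
    (hconv : ∀ i, Convex ℝ (K i)) (hne : ∀ i, (K i).Nonempty) (hσ : ∀ i, σ i ≠ 0) :
    ∃ p, IsSidedTangent K σ a p := by
  -- induction on the set `T` of indices `i ≠ a` for which `K i` may fail to be a point
  suffices h : ∀ (T : Finset (Fin (d + 1))) (K : Fin (d + 1) → Set (EuclideanSpace ℝ (Fin d))),
      StronglySeparated K → (∀ i, IsCompact (K i)) → (∀ i, Convex ℝ (K i)) →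
      (∀ i, (K i).Nonempty) → (∀ i ∉ T, i ≠ a → ∃ x, K i = {x}) → ∃ p, IsSidedTangent K σ a p from
    h Finset.univ K hK hcomp hconv hne fun i hi => absurd (Finset.mem_univ i) hi
  intro T
  induction T using Finset.induction_on with
  | empty =>
    intro K hK _ hconv hne hsing
    exact hK.exists_isSidedTangent_of_singleton (hconv a) (hne a) (hσ a)
      fun i hi => hsing i (Finset.notMem_empty i) hi
  | insert j T _ ih =>
    intro K hK hcomp hconv hne hsing
    rcases eq_or_ne j a with rfl | hja
    · exact ih K hK hcomp hconv hne fun i hiT hia => hsing i (by simp [hiT, hia]) hia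
    refine hK.exists_isSidedTangent_of_update hcomp hconv hne hσ hja fun c hc =>
      ih _ (hK.mono ?_) ?_ ?_ ?_ fun i hiT hia => ?_
    · exact (Function.forall_update_iff K fun i S => S ⊆ K i).2
        ⟨Set.singleton_subset_iff.2 hc, fun _ _ => subset_rfl⟩
    · exact (Function.forall_update_iff K fun _ S => IsCompact S).2
        ⟨isCompact_singleton, fun i _ => hcomp i⟩
    · exact (Function.forall_update_iff K fun _ S => Convex ℝ S).2
        ⟨convex_singleton c, fun i _ => hconv i⟩
    · exact (Function.forall_update_iff K fun _ S => S.Nonempty).2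
        ⟨Set.singleton_nonempty c, fun i _ => hne i⟩
    · rcases eq_or_ne i j with rfl | hij
      · exact ⟨c, Function.update_self _ _ _⟩
      · rw [Function.update_of_ne hij]
        exact hsing i (by simp [hij, hiT]) hia

lemma isSidedTangent_iff (hK : StronglySeparated K) {A B : Finset (Fin (d + 1))}
    (hdisj : Disjoint A B) (hunion : A ∪ B = Finset.univ) (ha : a ∈ A)
    {p : EuclideanSpace ℝ (Fin d) × ℝ} :
    IsSidedTangent K (fun i => if i ∈ A then 1 else -1) a p ↔ ‖p.1‖ = 1 ∧
      (∀ i : Fin (d + 1), i ≠ a → ({x | ⟪p.1, x⟫_ℝ = p.2} ∩ K i).Nonempty) ∧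
      (∀ i ∈ A, K i ⊆ {x | p.2 ≤ ⟪p.1, x⟫_ℝ}) ∧
      (∀ i ∈ B, K i ⊆ {x | ⟪p.1, x⟫_ℝ ≤ p.2}) ∧
      K a ⊆ {x | p.2 < ⟪p.1, x⟫_ℝ} := by
  have hB : ∀ i ∈ B, i ∉ A := fun i hiB hiA => Finset.disjoint_left.1 hdisj hiA hiB
  constructor
  · intro hp
    have hside : ∀ i, ∀ x ∈ K i, 0 ≤ (if i ∈ A then 1 else -1) * height x p := fun i =>
      if hi : i = a then hi ▸ hp.nonneg else (hp.supports i hi).2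
    refine ⟨hp.norm_fst, fun i hi => ?_, fun i hiA x hx => ?_, fun i hiB x hx => ?_,
      fun x hx => ?_⟩
    · obtain ⟨x, hx, hx0⟩ := (hp.supports i hi).1
      exact ⟨x, by simpa [sub_eq_zero] using hx0, hx⟩
    · simpa [hiA] using hside i x hx
    · simpa [hB i hiB] using hside i x hx
    · simpa [ha] using hK.sign_mul_height_pos (σ := fun i => if i ∈ A then 1 else -1)
        (by simp [ha]) hp.norm_fst (fun i hi => (hp.supports i hi).1) hp.nonneg hx
  · rintro ⟨hn, htouch, hA, hBside, -⟩
    have hside : ∀ i, ∀ x ∈ K i, 0 ≤ (if i ∈ A then 1 else -1) * height x p := fun i x hx => by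
      rcases Finset.mem_union.1 (Finset.eq_univ_iff_forall.1 hunion i) with hiA | hiB
      · simpa [hiA] using hA i hiA hx
      · simpa [hB i hiB] using hBside i hiB hx
    refine ⟨hn, fun i hi => ⟨?_, hside i⟩, hside a⟩
    obtain ⟨x, hx0, hx⟩ := htouch i hi
    exact ⟨x, hx, by simpa [sub_eq_zero] using hx0⟩

end StronglySeparated

theorem unique_tangent_avoiding_one_general {d : ℕ}
    (K : Fin (d + 1) → Set (EuclideanSpace ℝ (Fin d)))
    (hcomp : ∀ i, IsCompact (K i)) (hconv : ∀ i, Convex ℝ (K i))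
    (hne : ∀ i, (K i).Nonempty)
    (hsep : StronglySeparated K)
    (A B : Finset (Fin (d + 1))) (hdisj : Disjoint A B) (hunion : A ∪ B = Finset.univ)
    (a : Fin (d + 1)) (ha : a ∈ A) :
    ∃! p : EuclideanSpace ℝ (Fin d) × ℝ, ‖p.1‖ = 1 ∧
      (∀ i : Fin (d + 1), i ≠ a → ({x | ⟪p.1, x⟫_ℝ = p.2} ∩ K i).Nonempty) ∧
      (∀ i ∈ A, K i ⊆ {x | p.2 ≤ ⟪p.1, x⟫_ℝ}) ∧
      (∀ i ∈ B, K i ⊆ {x | ⟪p.1, x⟫_ℝ ≤ p.2}) ∧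
      K a ⊆ {x | p.2 < ⟪p.1, x⟫_ℝ} := by
  have hσ : ∀ i, (if i ∈ A then 1 else -1 : ℝ) ≠ 0 := fun i => by split_ifs <;> norm_num
  rw [← existsUnique_congr fun p => hsep.isSidedTangent_iff hdisj hunion ha (p := p)]
  obtain ⟨p, hp⟩ := hsep.exists_isSidedTangent hcomp hconv hne hσ (a := a)
  exact ⟨p, hp, fun q hq => hsep.isSidedTangent_unique hconv (hne a) hσ hq hp⟩

/-- For a strongly separated family of `d+1` nonempty compact convex sets in `ℝ^d` whose
`d`-element subfamilies are affinely spanning, a partition `A ⊔ B = [d+1]` and a special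
element `a ∈ A`, there is a unique oriented hyperplane `(u, α)` tangent to every set except
possibly `K a`, with `A` on the nonnegative side, `B` on the nonpositive side, and `K a`
strictly on the positive side. -/
theorem unique_tangent_avoiding_one {d : ℕ}
    (K : Fin (d + 1) → Set (EuclideanSpace ℝ (Fin d)))
    (hcomp : ∀ i, IsCompact (K i)) (hconv : ∀ i, Convex ℝ (K i))
    (hne : ∀ i, (K i).Nonempty)
    (hspan : ∀ i : Fin (d + 1), affineSpan ℝ (⋃ j ∈ ({i}ᶜ : Set (Fin (d + 1))), K j) = ⊤)
    (hsep : StronglySeparated K)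
    (A B : Finset (Fin (d + 1))) (hdisj : Disjoint A B) (hunion : A ∪ B = Finset.univ)
    (a : Fin (d + 1)) (ha : a ∈ A) :
    ∃! p : EuclideanSpace ℝ (Fin d) × ℝ, ‖p.1‖ = 1 ∧
      (∀ i : Fin (d + 1), i ≠ a → ({x | ⟪p.1, x⟫_ℝ = p.2} ∩ K i).Nonempty) ∧
      (∀ i ∈ A, K i ⊆ {x | p.2 ≤ ⟪p.1, x⟫_ℝ}) ∧
      (∀ i ∈ B, K i ⊆ {x | ⟪p.1, x⟫_ℝ ≤ p.2}) ∧
      K a ⊆ {x | p.2 < ⟪p.1, x⟫_ℝ} :=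
  unique_tangent_avoiding_one_general K hcomp hconv hne hsep A B hdisj hunion a ha
end

section
/- Let K₁,…,Kₘ be a strongly separated family of nonempty subsets of ℝ^d. Then for any choice of points pᵢ ∈ Kᵢ (i = 1,…,m), the points p₁,…,pₘ are affinely independent; in particular, m ≤ d + 1, so there is no strongly separated family of d+2 or more nonempty sets in ℝ^d. -/
open scoped InnerProductSpace

/-- Points chosen from the members of a strongly separated family of nonempty sets are
affinely independent; in particular there is no strongly separated family of more than
`d + 1` nonempty sets in `ℝ^d`. -/
theorem strongly_separated_affinely_independent {d m : ℕ}
    (K : Fin m → Set (EuclideanSpace ℝ (Fin d)))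
    (hne : ∀ i, (K i).Nonempty)
    (hsep : StronglySeparated K) :
    (∀ p : Fin m → EuclideanSpace ℝ (Fin d), (∀ i, p i ∈ K i) →
      AffineIndependent ℝ p) ∧ m ≤ d + 1 := by
  have hai : ∀ p : Fin m → EuclideanSpace ℝ (Fin d), (∀ i, p i ∈ K i) →
      AffineIndependent ℝ p := by
    intro p hp
    rw [affineIndependent_iff]
    intro s w hw hcomb
    -- separate positive-weight indices from the rest
    obtain ⟨u, α, -, hI, hIc⟩ := hsep ((Finset.univ : Finset (Fin m)).filter (fun i => 0 < w i))
    -- key sum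
    have hterm : ∀ i ∈ s, w i * (⟪u, p i⟫_ℝ - α) ≤ 0 := by
      intro i _
      rcases lt_trichotomy 0 (w i) with h | h | h
      · have : ⟪u, p i⟫_ℝ < α := hI i (by simp [h]) (p i) (hp i)
        nlinarith
      · simp [← h]
      · have : α < ⟪u, p i⟫_ℝ := hIc i (by simp [not_lt.2 h.le, h.not_gt]) (p i) (hp i)
        nlinarith
    have hsum : ∑ i ∈ s, w i * (⟪u, p i⟫_ℝ - α) = 0 := by
      have h1 : ∑ i ∈ s, w i * ⟪u, p i⟫_ℝ = 0 := by
        have h2 : ⟪u, ∑ i ∈ s, w i • p i⟫_ℝ = 0 := by rw [hcomb, inner_zero_right]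
        rw [inner_sum] at h2
        simp_rw [real_inner_smul_right] at h2
        exact h2
      calc ∑ i ∈ s, w i * (⟪u, p i⟫_ℝ - α)
          = ∑ i ∈ s, (w i * ⟪u, p i⟫_ℝ - w i * α) := by
            simp [mul_sub]
        _ = (∑ i ∈ s, w i * ⟪u, p i⟫_ℝ) - (∑ i ∈ s, w i) * α := by
            rw [Finset.sum_sub_distrib, Finset.sum_mul]
        _ = 0 := by rw [h1, hw]; ring
    have hzero : ∀ i ∈ s, w i * (⟪u, p i⟫_ℝ - α) = 0 :=
      (Finset.sum_eq_zero_iff_of_nonpos hterm).1 hsum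
    intro i hi
    by_contra hwi
    rcases lt_or_gt_of_ne hwi with h | h
    · have hgt : α < ⟪u, p i⟫_ℝ := hIc i (by simp [h.not_gt, not_lt.2 h.le]) (p i) (hp i)
      have := hzero i hi
      nlinarith
    · have hlt : ⟪u, p i⟫_ℝ < α := hI i (by simp [h]) (p i) (hp i)
      have := hzero i hi
      nlinarith
  refine ⟨hai, ?_⟩
  choose p hp using hne
  have h := (hai p hp).card_le_finrank_succ
  have hle : Module.finrank ℝ (vectorSpan ℝ (Set.range p)) ≤ d := by
    have := Submodule.finrank_le (vectorSpan ℝ (Set.range p))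
    simpa using this
  simpa using h.trans (by omega)
end

section
/- For every natural number N there exist three pairwise disjoint convex bodies K₁, K₂, K₃ in ℝ³ such that the collection of affine planes that are tangent to all three bodies (that is, planes H = {x : ⟨u,x⟩ = α} with u ≠ 0 such that for each i, H ∩ Kᵢ ≠ ∅ and Kᵢ lies in one of the two closed half-spaces bounded by H) has at least N elements. In particular, pairwise strict separation (disjointness) cannot replace strong separation in Bisztriczky's theorem on the 2^d common tangents. -/
open scoped InnerProductSpace

noncomputable def euclEquiv3 := EuclideanSpace.equiv (Fin 3) ℝ

/-- The three disjoint boxes: `K i = [0,1] × [0,1] × [3i, 3i+1]`. -/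
noncomputable def boxBody (i : Fin 3) : Set (EuclideanSpace ℝ (Fin 3)) :=
  (⇑euclEquiv3) ⁻¹' Set.univ.pi
    ![Set.Icc 0 1, Set.Icc 0 1, Set.Icc (3 * (i : ℝ)) (3 * (i : ℝ) + 1)]

lemma mem_boxBody {i : Fin 3} {x : EuclideanSpace ℝ (Fin 3)} :
    x ∈ boxBody i ↔ x 0 ∈ Set.Icc (0:ℝ) 1 ∧ x 1 ∈ Set.Icc (0:ℝ) 1 ∧
      x 2 ∈ Set.Icc (3 * (i : ℝ)) (3 * (i : ℝ) + 1) := by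
  simp only [boxBody, Set.mem_preimage, Set.mem_univ_pi]
  constructor
  · intro h; exact ⟨h 0, h 1, h 2⟩
  · rintro ⟨h0, h1, h2⟩ j
    fin_cases j <;> simpa using by first | exact h0 | exact h1 | exact h2

lemma inner_eucl3 (u x : EuclideanSpace ℝ (Fin 3)) :
    ⟪u, x⟫_ℝ = u 0 * x 0 + u 1 * x 1 + u 2 * x 2 := by
  simp [PiLp.inner_apply, RCLike.inner_apply, Fin.sum_univ_three, mul_comm]

/-- Pairwise disjointness cannot replace strong separation in Bisztriczky's theorem: for
every `N` there are three pairwise disjoint convex bodies in `ℝ³` with at least `N` common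
tangent planes. -/
theorem disjoint_bodies_many_tangents (N : ℕ) :
    ∃ K : Fin 3 → Set (EuclideanSpace ℝ (Fin 3)),
      (∀ i, IsCompact (K i)) ∧ (∀ i, Convex ℝ (K i)) ∧
      (∀ i, (interior (K i)).Nonempty) ∧
      (∀ i j, i ≠ j → Disjoint (K i) (K j)) ∧
      (N : ℕ∞) ≤
        {H : Set (EuclideanSpace ℝ (Fin 3)) | ∃ (u : EuclideanSpace ℝ (Fin 3)) (α : ℝ),
          u ≠ 0 ∧ H = {x | ⟪u, x⟫_ℝ = α} ∧
          ∀ i : Fin 3, (H ∩ K i).Nonempty ∧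
            (K i ⊆ {x | α ≤ ⟪u, x⟫_ℝ} ∨ K i ⊆ {x | ⟪u, x⟫_ℝ ≤ α})}.encard := by
  refine ⟨boxBody, ?_, ?_, ?_, ?_, ?_⟩
  · -- compactness
    intro i
    rw [show boxBody i = (euclEquiv3.symm : (Fin 3 → ℝ) →L[ℝ] _) ''
        (Set.univ.pi ![Set.Icc 0 1, Set.Icc 0 1,
          Set.Icc (3 * (i : ℝ)) (3 * (i : ℝ) + 1)]) by
      ext x
      simp only [boxBody, Set.mem_preimage, Set.mem_image]
      constructor
      · intro hx; exact ⟨euclEquiv3 x, hx, by simp [euclEquiv3]⟩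
      · rintro ⟨y, hy, rfl⟩; simpa [euclEquiv3] using hy]
    refine IsCompact.image ?_ (ContinuousLinearMap.continuous _)
    refine isCompact_univ_pi fun j => ?_
    fin_cases j <;> simp <;> exact isCompact_Icc
  · -- convexity
    intro i x hx y hy a b ha hb hab
    rw [mem_boxBody] at hx hy ⊢
    exact ⟨convex_Icc _ _ hx.1 hy.1 ha hb hab,
      convex_Icc _ _ hx.2.1 hy.2.1 ha hb hab,
      convex_Icc _ _ hx.2.2 hy.2.2 ha hb hab⟩
  · -- nonempty interior
    intro i
    set c : EuclideanSpace ℝ (Fin 3) :=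
      euclEquiv3.symm ![(1:ℝ)/2, 1/2, 3 * (i : ℝ) + 1/2] with hc
    have hU : IsOpen ((⇑euclEquiv3) ⁻¹' Set.univ.pi
        ![Set.Ioo 0 1, Set.Ioo 0 1, Set.Ioo (3 * (i : ℝ)) (3 * (i : ℝ) + 1)]) := by
      refine IsOpen.preimage euclEquiv3.continuous ?_
      refine isOpen_set_pi Set.finite_univ fun j _ => ?_
      fin_cases j <;> simp <;> exact isOpen_Ioo
    have hsub : ((⇑euclEquiv3) ⁻¹' Set.univ.pi
        ![Set.Ioo 0 1, Set.Ioo 0 1, Set.Ioo (3 * (i : ℝ)) (3 * (i : ℝ) + 1)]) ⊆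
        boxBody i := by
      intro x hx
      rw [mem_boxBody]
      have h0 := hx 0 (Set.mem_univ _)
      have h1 := hx 1 (Set.mem_univ _)
      have h2 := hx 2 (Set.mem_univ _)
      exact ⟨Set.Ioo_subset_Icc_self h0, Set.Ioo_subset_Icc_self h1,
        Set.Ioo_subset_Icc_self h2⟩
    refine ⟨c, ?_⟩
    rw [mem_interior]
    refine ⟨_, hsub, hU, ?_⟩
    intro j _
    fin_cases j
    · show ((1:ℝ)/2) ∈ Set.Ioo (0:ℝ) 1; norm_num
    · show ((1:ℝ)/2) ∈ Set.Ioo (0:ℝ) 1; norm_num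
    · show (3 * (i : ℝ) + 1/2) ∈ Set.Ioo (3 * (i : ℝ)) (3 * (i : ℝ) + 1)
      constructor <;> norm_num
  · -- disjointness
    intro i j hij
    rw [Set.disjoint_left]
    intro x hxi hxj
    have h2i := (mem_boxBody.mp hxi).2.2
    have h2j := (mem_boxBody.mp hxj).2.2
    have h1 : ((i : ℕ) : ℝ) < ((j : ℕ) : ℝ) + 1 := by
      nlinarith [h2i.1, h2i.2, h2j.1, h2j.2]
    have h2 : ((j : ℕ) : ℝ) < ((i : ℕ) : ℝ) + 1 := by
      nlinarith [h2i.1, h2i.2, h2j.1, h2j.2]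
    have h1' : (i : ℕ) < (j : ℕ) + 1 := by exact_mod_cast h1
    have h2' : (j : ℕ) < (i : ℕ) + 1 := by exact_mod_cast h2
    exact hij (Fin.ext (by omega))
  · -- many tangent planes
    set u : Fin N → EuclideanSpace ℝ (Fin 3) :=
      fun k => euclEquiv3.symm ![1, (k : ℝ), 0] with hu
    have hu0 : ∀ k, u k 0 = 1 := fun k => rfl
    have hu1 : ∀ k, u k 1 = (k : ℝ) := fun k => rfl
    have hu2 : ∀ k, u k 2 = 0 := fun k => rfl
    set f : Fin N → Set (EuclideanSpace ℝ (Fin 3)) :=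
      fun k => {x | ⟪u k, x⟫_ℝ = 0} with hf
    have hp : ∀ i : Fin 3, ∃ p : EuclideanSpace ℝ (Fin 3),
        p ∈ boxBody i ∧ p 0 = 0 ∧ p 1 = 0 := by
      intro i
      refine ⟨euclEquiv3.symm ![0, 0, 3 * (i : ℝ)], ?_, rfl, rfl⟩
      rw [mem_boxBody]
      refine ⟨?_, ?_, ?_⟩
      · show (0:ℝ) ∈ Set.Icc (0:ℝ) 1; norm_num
      · show (0:ℝ) ∈ Set.Icc (0:ℝ) 1; norm_num
      · show (3 * (i : ℝ)) ∈ Set.Icc (3 * (i : ℝ)) (3 * (i : ℝ) + 1)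
        constructor <;> norm_num
    have hmem : ∀ k, f k ∈ {H : Set (EuclideanSpace ℝ (Fin 3)) |
        ∃ (v : EuclideanSpace ℝ (Fin 3)) (α : ℝ),
          v ≠ 0 ∧ H = {x | ⟪v, x⟫_ℝ = α} ∧
          ∀ i : Fin 3, (H ∩ boxBody i).Nonempty ∧
            (boxBody i ⊆ {x | α ≤ ⟪v, x⟫_ℝ} ∨ boxBody i ⊆ {x | ⟪v, x⟫_ℝ ≤ α})} := by
      intro k
      refine ⟨u k, 0, ?_, rfl, ?_⟩
      · intro h
        have h0 : u k 0 = 0 := by rw [h]; rfl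
        rw [hu0] at h0
        exact one_ne_zero h0
      · intro i
        obtain ⟨p, hpmem, hp0, hp1⟩ := hp i
        constructor
        · refine ⟨p, ?_, hpmem⟩
          show ⟪u k, p⟫_ℝ = 0
          rw [inner_eucl3, hp0, hp1, hu2]
          ring
        · left
          intro x hx
          obtain ⟨h0, h1, _⟩ := mem_boxBody.mp hx
          show (0:ℝ) ≤ ⟪u k, x⟫_ℝ
          rw [inner_eucl3, hu0, hu1, hu2]
          have hk : (0:ℝ) ≤ (k : ℝ) := Nat.cast_nonneg _
          nlinarith [h0.1, h0.2, h1.1, h1.2]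
    have hinj : Function.Injective f := by
      intro k k' hkk'
      set q : EuclideanSpace ℝ (Fin 3) := euclEquiv3.symm ![-(k : ℝ), 1, 0] with hq
      have hq0 : q 0 = -(k:ℝ) := rfl
      have hq1 : q 1 = 1 := rfl
      have hq2 : q 2 = 0 := rfl
      have hqk : q ∈ f k := by
        show ⟪u k, q⟫_ℝ = 0
        rw [inner_eucl3, hu0, hu1, hu2, hq0, hq1, hq2]; ring
      rw [hkk'] at hqk
      have : ⟪u k', q⟫_ℝ = 0 := hqk
      rw [inner_eucl3, hu0, hu1, hu2, hq0, hq1, hq2] at this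
      have hkk : ((k : ℕ) : ℝ) = ((k' : ℕ) : ℝ) := by linarith
      exact Fin.ext (by exact_mod_cast hkk)
    calc (N : ℕ∞) = (Set.univ : Set (Fin N)).encard := by
          simp [Set.encard_univ]
      _ = (Set.range f).encard := by
          rw [← Set.image_univ, (hinj.injOn).encard_image]
      _ ≤ _ := Set.encard_mono (Set.range_subset_iff.mpr hmem)
end
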